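/- For reduced words u and v over the letter alphabet, u is always a ≼-predecessor-or-equal of the non-splitting reduct [u·v]; that is, u ≼ [u·v]. -/

import Mathlib

variable {V : Type*} [DecidableEq V] [Fintype V]

/-- A letter is a nonempty connected subset of the graph `G`
(connectedness of the induced subgraph includes nonemptiness). -/
def IsLetter (G : SimpleGraph V) (s : Finset V) : Prop :=
  (G.induce (↑s : Set V)).Connected

/-- The type of letters of `G`. -/
def Letter (G : SimpleGraph V) := {s : Finset V // IsLetter G s}

/-- A word is a finite sequence of letters. -/
abbrev Word (G : SimpleGraph V) := List (Letter G)

/-- Two letters commute iff their union is not a letter (is disconnected). -/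
def LCommute (G : SimpleGraph V) (s t : Letter G) : Prop :=
  ¬ IsLetter G (s.1 ∪ t.1)

/-- Two words commute if their letters pairwise commute. -/
def WCommute (G : SimpleGraph V) (u v : Word G) : Prop :=
  ∀ s ∈ u, ∀ t ∈ v, LCommute G s t

/-- One swap of two adjacent commuting letters. -/
def LSwapStep (G : SimpleGraph V) (w w' : Word G) : Prop :=
  ∃ (a b : Word G) (s t : Letter G), LCommute G s t ∧
    w = a ++ s :: t :: b ∧ w' = a ++ t :: s :: b

/-- Equivalence (`≈`) of words: sequences of swaps of adjacent commuting letters. -/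
def WEquiv (G : SimpleGraph V) : Word G → Word G → Prop :=
  Relation.ReflTransGen (LSwapStep G)

/-- A word is reduced if there is no pair of comparable letters such that the
smaller one commutes with all letters strictly in between. -/
def WIsReduced (G : SimpleGraph V) (w : Word G) : Prop :=
  ¬ ∃ (a b c : Word G) (s t : Letter G),
      w = a ++ s :: (b ++ t :: c) ∧
      ((s.1 ⊆ t.1 ∧ ∀ r ∈ b, LCommute G s r) ∨
       (t.1 ⊆ s.1 ∧ ∀ r ∈ b, LCommute G t r))

/-- A splitting of a letter `s`: a (possibly empty) word whose letters are
proper subsets of `s`. -/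
def IsSplitting (G : SimpleGraph V) (x : Word G) (s : Letter G) : Prop :=
  ∀ t ∈ x, t.1 ⊂ s.1

/-- `SplitStep G u v`: `u` is obtained from `v` by replacing one occurrence of a
letter by a splitting of it. -/
def SplitStep (G : SimpleGraph V) (u v : Word G) : Prop :=
  ∃ (a b x : Word G) (s : Letter G),
    v = a ++ s :: b ∧ IsSplitting G x s ∧ u = a ++ x ++ b

/-- One step of the splitting order up to equivalence. -/
def PrecStep (G : SimpleGraph V) (u v : Word G) : Prop :=
  ∃ u' v', WEquiv G v v' ∧ SplitStep G u' v' ∧ WEquiv G u u'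

/-- The splitting order `≺` on words. -/
def WPrec (G : SimpleGraph V) : Word G → Word G → Prop :=
  Relation.TransGen (PrecStep G)

/-- `u ≼ v` : `u ≺ v` or `u ≈ v`. -/
def WPreceq (G : SimpleGraph V) (u v : Word G) : Prop :=
  WPrec G u v ∨ WEquiv G u v

/-- Absorption: if `s ⊆ t`, replace a subword `s·t` (or `t·s`) by `t`. -/
def AbsorbStep (G : SimpleGraph V) (w w' : Word G) : Prop :=
  ∃ (a b : Word G) (s t : Letter G), s.1 ⊆ t.1 ∧
    (w = a ++ s :: t :: b ∨ w = a ++ t :: s :: b) ∧ w' = a ++ t :: b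

/-- A non-splitting reduction step: Commutation or Absorption. -/
def NSStep (G : SimpleGraph V) (w w' : Word G) : Prop :=
  LSwapStep G w w' ∨ AbsorbStep G w w'

/-- `NSRed G u v`: `v` is a non-splitting reduction of `u`, i.e. a reduced word
obtained from `u` by Commutation and Absorption steps only. -/
def NSRed (G : SimpleGraph V) (u v : Word G) : Prop :=
  Relation.ReflTransGen (NSStep G) u v ∧ WIsReduced G v

/-- The letter `t` is left-absorbed by the word `w`: `t` is contained in some
letter of `w` and commutes with all earlier letters. -/
def LetterLeftAbsorbed (G : SimpleGraph V) (t : Letter G) (w : Word G) : Prop :=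
  ∃ (a b : Word G) (s : Letter G), w = a ++ s :: b ∧ t.1 ⊆ s.1 ∧ ∀ r ∈ a, LCommute G t r

/-- The letter `t` is right-absorbed by the word `w`. -/
def LetterRightAbsorbed (G : SimpleGraph V) (t : Letter G) (w : Word G) : Prop :=
  ∃ (a b : Word G) (s : Letter G), w = a ++ s :: b ∧ t.1 ⊆ s.1 ∧ ∀ r ∈ b, LCommute G t r

/-- The letter `t` is properly left-absorbed by the word `w`. -/
def LetterProperLeftAbsorbed (G : SimpleGraph V) (t : Letter G) (w : Word G) : Prop :=
  ∃ (a b : Word G) (s : Letter G), w = a ++ s :: b ∧ t.1 ⊂ s.1 ∧ ∀ r ∈ a, LCommute G t r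

/-- The letter `t` is properly right-absorbed by the word `w`. -/
def LetterProperRightAbsorbed (G : SimpleGraph V) (t : Letter G) (w : Word G) : Prop :=
  ∃ (a b : Word G) (s : Letter G), w = a ++ s :: b ∧ t.1 ⊂ s.1 ∧ ∀ r ∈ b, LCommute G t r

/-- A word `u` is left-absorbed by `w` if each of its letters is. -/
def LeftAbsorbed (G : SimpleGraph V) (u w : Word G) : Prop :=
  ∀ t ∈ u, LetterLeftAbsorbed G t w

/-- A word `u` is right-absorbed by `w` if each of its letters is. -/
def RightAbsorbed (G : SimpleGraph V) (u w : Word G) : Prop :=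
  ∀ t ∈ u, LetterRightAbsorbed G t w

/-- A word `u` is properly left-absorbed by `w` if each of its letters is. -/
def ProperLeftAbsorbed (G : SimpleGraph V) (u w : Word G) : Prop :=
  ∀ t ∈ u, LetterProperLeftAbsorbed G t w

/-- A word `u` is properly right-absorbed by `w` if each of its letters is. -/
def ProperRightAbsorbed (G : SimpleGraph V) (u w : Word G) : Prop :=
  ∀ t ∈ u, LetterProperRightAbsorbed G t w

/-- A commuting word: its letters pairwise commute. -/
def IsCommuting (G : SimpleGraph V) (u : Word G) : Prop :=
  List.Pairwise (LCommute G) u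

/-- The letter `s` is an end of the word `u` if `u ≈ v·s` for some `v`. -/
def IsEnd (G : SimpleGraph V) (s : Letter G) (u : Word G) : Prop :=
  ∃ v, WEquiv G u (v ++ [s])

/-- `t` is the final segment of `u`: the commuting word consisting of all ends of `u`. -/
def IsFinalSegment (G : SimpleGraph V) (t u : Word G) : Prop :=
  IsCommuting G t ∧ ∀ s, s ∈ t ↔ IsEnd G s u

/-! Follow a non-splitting reduction of `u·v` while keeping a decomposition of the current word
into blocks, one per letter, each block being the letter itself or a splitting of it, such that
the concatenation of the blocks is equivalent to `u`. Initially every letter of `u` is its own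
block and every letter of `v` gets the empty block. A commutation swaps two blocks, which commute
because their letters lie in commuting letters. An absorption `s·t ↦ t` (or `t·s ↦ t`) with
`s ⊆ t` concatenates the two blocks; the result is again a block of `t` because the word of
blocks is equivalent to `u`, hence reduced, so no two comparable letters meet at the junction.
Splitting each letter of the reduct into its block then exhibits `u ≼ [u·v]`. -/

set_option linter.unusedSectionVars false

section Letters

variable {G : SimpleGraph V} {r s t : Letter G}

lemma Letter.nonempty (s : Letter G) : s.1.Nonempty := by
  obtain ⟨⟨x, hx⟩⟩ := s.2.nonempty
  exact ⟨x, by simpa using hx⟩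

lemma LCommute.symm (h : LCommute G s t) : LCommute G t s := by
  rwa [LCommute, Finset.union_comm]

/-- If `t ∪ r` were connected, then so would be `s ∪ t ∪ r = s ∪ r`, as `t ⊆ s` meets `s`. -/
lemma LCommute.mono_left (h : LCommute G s r) (hts : t.1 ⊆ s.1) : LCommute G t r := by
  intro htr
  obtain ⟨x, hx⟩ := t.nonempty
  have hconn : IsLetter G (s.1 ∪ (t.1 ∪ r.1)) := by
    rw [IsLetter, Finset.coe_union]
    exact SimpleGraph.induce_union_connected s.2.preconnected htr.preconnected
      ⟨x, by simpa using hts hx, by simp [hx]⟩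
  rw [← Finset.union_assoc, Finset.union_eq_left.mpr hts] at hconn
  exact h hconn

lemma LCommute.mono_right (h : LCommute G s r) (htr : t.1 ⊆ r.1) : LCommute G s t :=
  (h.symm.mono_left htr).symm

lemma not_lcommute_of_subset (h : s.1 ⊆ t.1) : ¬ LCommute G s t := fun hc =>
  hc (by rw [Finset.union_eq_right.mpr h]; exact t.2)

end Letters

section Equivalence

variable {G : SimpleGraph V} {p : Letter G} {u w x y : Word G}

lemma LSwapStep.symm (h : LSwapStep G x y) : LSwapStep G y x := by
  obtain ⟨a, b, s, t, hc, rfl, rfl⟩ := h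
  exact ⟨a, b, t, s, hc.symm, rfl, rfl⟩

lemma LSwapStep.append (h : LSwapStep G x y) (A B : Word G) :
    LSwapStep G (A ++ x ++ B) (A ++ y ++ B) := by
  obtain ⟨a, b, s, t, hc, rfl, rfl⟩ := h
  exact ⟨A ++ a, b ++ B, s, t, hc, by simp, by simp⟩

lemma WEquiv.refl : WEquiv G w w := Relation.ReflTransGen.refl

lemma WEquiv.trans (huv : WEquiv G u w) (hvw : WEquiv G w x) : WEquiv G u x :=
  Relation.ReflTransGen.trans huv hvw

lemma WEquiv.symm (h : WEquiv G x y) : WEquiv G y x := by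
  induction h with
  | refl => exact .refl
  | tail _ hs ih => exact Relation.ReflTransGen.head hs.symm ih

lemma WEquiv.append (h : WEquiv G x y) (A B : Word G) :
    WEquiv G (A ++ x ++ B) (A ++ y ++ B) :=
  h.lift (fun z => A ++ z ++ B) fun _ _ hs => hs.append A B

lemma WEquiv.cons (h : WEquiv G x y) (c : Letter G) : WEquiv G (c :: x) (c :: y) := by
  simpa using h.append [c] []

lemma wequiv_cons_append_singleton (h : ∀ q ∈ y, LCommute G p q) :
    WEquiv G (p :: y) (y ++ [p]) := by
  induction y with
  | nil => exact .refl
  | cons q y ih =>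
    have hswap : LSwapStep G (p :: q :: y) (q :: p :: y) :=
      ⟨[], y, p, q, h q (by simp), rfl, rfl⟩
    exact .head hswap ((ih fun q hq => h q (by simp [hq])).cons q)

lemma wequiv_append_comm (h : WCommute G x y) : WEquiv G (x ++ y) (y ++ x) := by
  induction x with
  | nil => rw [List.nil_append, List.append_nil]; exact .refl
  | cons p x ih =>
    have hmove : WEquiv G (p :: (y ++ x)) (y ++ p :: x) := by
      simpa using (wequiv_cons_append_singleton (h p (by simp))).append [] x
    exact ((ih fun s hs => h s (by simp [hs])).cons p).trans hmove

end Equivalence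

section Reduced

variable {G : SimpleGraph V} {c d x y : Letter G} {a b w w' : Word G}

lemma letterLeftAbsorbed_cons_iff :
    LetterLeftAbsorbed G c (d :: w) ↔
      c.1 ⊆ d.1 ∨ (LCommute G c d ∧ LetterLeftAbsorbed G c w) := by
  constructor
  · rintro ⟨_ | ⟨e, a⟩, b, s, h, hcs, hca⟩
    · obtain ⟨rfl, rfl⟩ := List.cons_eq_cons.mp h
      exact .inl hcs
    · obtain ⟨rfl, rfl⟩ := List.cons_eq_cons.mp h
      exact .inr ⟨hca _ List.mem_cons_self, a, b, s, rfl, hcs, fun r hr => hca r (by simp [hr])⟩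
  · rintro (hcd | ⟨hcd, a, b, s, rfl, hcs, hca⟩)
    · exact ⟨[], w, d, rfl, hcd, by simp⟩
    · exact ⟨d :: a, b, s, rfl, hcs, by simpa [hcd] using hca⟩

lemma LetterLeftAbsorbed.swap (hxy : LCommute G x y)
    (h : LetterLeftAbsorbed G c (a ++ x :: y :: b)) :
    LetterLeftAbsorbed G c (a ++ y :: x :: b) := by
  induction a with
  | nil =>
    have hcy : c.1 ⊆ x.1 → LCommute G c y := hxy.mono_left
    simp only [List.nil_append, letterLeftAbsorbed_cons_iff] at h ⊢
    tauto
  | cons e a ih =>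
    simp only [List.cons_append, letterLeftAbsorbed_cons_iff] at h ⊢
    tauto

def LeftReducible (G : SimpleGraph V) : Word G → Prop
  | [] => False
  | c :: w => LetterLeftAbsorbed G c w ∨ LeftReducible G w

lemma LeftReducible.swap (hxy : LCommute G x y) (h : LeftReducible G (a ++ x :: y :: b)) :
    LeftReducible G (a ++ y :: x :: b) := by
  induction a with
  | nil =>
    have hxy' : ¬ x.1 ⊆ y.1 := fun hsub => not_lcommute_of_subset hsub hxy
    simp only [List.nil_append, LeftReducible, letterLeftAbsorbed_cons_iff] at h ⊢
    have := hxy.symm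
    tauto
  | cons e a ih =>
    simp only [List.cons_append, LeftReducible] at h ⊢
    exact h.imp (·.swap hxy) ih

lemma leftReducible_iff : LeftReducible G w ↔ ∃ a s b t c, w = a ++ s :: (b ++ t :: c) ∧
    s.1 ⊆ t.1 ∧ ∀ r ∈ b, LCommute G s r := by
  induction w with
  | nil => simp [LeftReducible]
  | cons d w ih =>
    rw [LeftReducible, ih]
    constructor
    · rintro (⟨b, c, t, rfl, hdt, hdb⟩ | ⟨a, s, b, t, c, rfl, hst, hsb⟩)
      · exact ⟨[], d, b, t, c, rfl, hdt, hdb⟩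
      · exact ⟨d :: a, s, b, t, c, rfl, hst, hsb⟩
    · rintro ⟨_ | ⟨e, a⟩, s, b, t, c, h, hst, hsb⟩ <;>
        obtain ⟨rfl, rfl⟩ := List.cons_eq_cons.mp h
      · exact .inl ⟨b, c, t, rfl, hst, hsb⟩
      · exact .inr ⟨a, s, b, t, c, rfl, hst, hsb⟩

/-- The two alternatives in `WIsReduced` are mirror images of each other. -/
lemma not_wIsReduced_iff :
    ¬ WIsReduced G w ↔ LeftReducible G w ∨ LeftReducible G w.reverse := by
  rw [WIsReduced, not_not, leftReducible_iff, leftReducible_iff]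
  constructor
  · rintro ⟨a, b, c, s, t, rfl, ⟨hst, hsb⟩ | ⟨hts, htb⟩⟩
    · exact .inl ⟨a, s, b, t, c, rfl, hst, hsb⟩
    · exact .inr ⟨c.reverse, t, b.reverse, s, a.reverse, by simp, hts, by simpa using htb⟩
  · rintro (⟨a, s, b, t, c, rfl, hst, hsb⟩ | ⟨a, s, b, t, c, h, hst, hsb⟩)
    · exact ⟨a, b, c, s, t, rfl, .inl ⟨hst, hsb⟩⟩
    · exact ⟨c.reverse, b.reverse, a.reverse, t, s, by simpa using congrArg List.reverse h,
        .inr ⟨hst, by simpa using hsb⟩⟩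

lemma WIsReduced.reverse (h : WIsReduced G w) : WIsReduced G w.reverse := by
  by_contra hrev
  rw [not_wIsReduced_iff, List.reverse_reverse, or_comm, ← not_wIsReduced_iff] at hrev
  exact hrev h

lemma WIsReduced.of_lSwapStep (hs : LSwapStep G w' w) (h : WIsReduced G w) : WIsReduced G w' := by
  obtain ⟨a, b, x, y, hxy, rfl, rfl⟩ := hs
  by_contra hw'
  rw [not_wIsReduced_iff] at hw'
  refine not_wIsReduced_iff.mpr (hw'.imp (LeftReducible.swap hxy) fun hrev => ?_) h
  have hrev' : LeftReducible G (b.reverse ++ y :: x :: a.reverse) := by simpa using hrev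
  simpa using hrev'.swap hxy.symm

lemma WIsReduced.of_wequiv (he : WEquiv G w' w) (h : WIsReduced G w) : WIsReduced G w' := by
  induction he with
  | refl => exact h
  | tail _ hs ih => exact ih (h.of_lSwapStep hs)

lemma WIsReduced.not_subset_of_adjacent (h : WIsReduced G (a ++ x :: y :: b)) :
    ¬ x.1 ⊆ y.1 ∧ ¬ y.1 ⊆ x.1 := by
  constructor <;> intro hsub <;> refine h ⟨a, [], b, x, y, rfl, ?_⟩ <;> simp [hsub]

end Reduced

def IsBlock (G : SimpleGraph V) (x : Word G) (s : Letter G) : Prop :=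
  x = [s] ∨ IsSplitting G x s

section Blocks

variable {G : SimpleGraph V} {r s t : Letter G} {x y X Y : Word G}

lemma IsBlock.subset (h : IsBlock G x s) (hr : r ∈ x) : r.1 ⊆ s.1 := by
  rcases h with rfl | h
  · rw [List.mem_singleton.mp hr]
  · exact (h r hr).subset

lemma isBlock_singleton_of_subset (h : s.1 ⊆ t.1) : IsBlock G [s] t := by
  by_cases hst : s = t
  · exact .inl (by rw [hst])
  · refine .inr fun r hr => ?_
    rw [List.mem_singleton.mp hr]
    exact h.ssubset_of_ne fun he => hst (Subtype.ext he)

lemma IsBlock.reverse (h : IsBlock G x s) : IsBlock G x.reverse s := by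
  rcases h with rfl | h
  · exact .inl rfl
  · exact .inr fun r hr => h r (List.mem_reverse.mp hr)

/-- The only obstructions, `[s]·[t]`, `[t]·t'·…` with `t' ⊂ t` and `…·s'·[t]` with
`s' ⊂ s`, put comparable letters side by side, which reducedness forbids. -/
lemma IsBlock.absorb_left (hred : WIsReduced G (X ++ x ++ y ++ Y)) (hx : IsBlock G x s)
    (hy : IsBlock G y t) (hst : s.1 ⊆ t.1) : IsBlock G (x ++ y) t := by
  rcases hx with rfl | hx <;> rcases hy with rfl | hy
  · rw [show X ++ [s] ++ [t] ++ Y = X ++ s :: t :: Y by simp] at hred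
    exact absurd hst hred.not_subset_of_adjacent.1
  · cases y with
    | nil => exact isBlock_singleton_of_subset hst
    | cons t' y =>
      rw [show X ++ [s] ++ t' :: y ++ Y = X ++ s :: t' :: (y ++ Y) by simp] at hred
      have hs_ne : s ≠ t := by
        rintro rfl
        exact hred.not_subset_of_adjacent.2 (hy t' (by simp)).subset
      refine .inr fun r hr => ?_
      rcases List.mem_cons.mp hr with rfl | hr
      · exact hst.ssubset_of_ne fun he => hs_ne (Subtype.ext he)
      · exact hy r hr
  · rcases List.eq_nil_or_concat' x with rfl | ⟨x, s', rfl⟩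
    · exact .inl rfl
    · rw [show X ++ (x ++ [s']) ++ [t] ++ Y = (X ++ x) ++ s' :: t :: Y by simp] at hred
      exact absurd ((hx s' (by simp)).subset.trans hst) hred.not_subset_of_adjacent.1
  · refine .inr fun r hr => ?_
    rcases List.mem_append.mp hr with hr | hr
    · exact (hx r hr).trans_subset hst
    · exact hy r hr

lemma IsBlock.absorb_right (hred : WIsReduced G (X ++ y ++ x ++ Y)) (hx : IsBlock G x s)
    (hy : IsBlock G y t) (hst : s.1 ⊆ t.1) : IsBlock G (y ++ x) t := by
  have hred' : WIsReduced G (Y.reverse ++ x.reverse ++ y.reverse ++ X.reverse) := by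
    simpa using hred.reverse
  simpa using (hx.reverse.absorb_left hred' hy.reverse hst).reverse

end Blocks

section Order

variable {G : SimpleGraph V} {c : Letter G} {u v w x : Word G}

lemma PrecStep.of_wequiv_left (he : WEquiv G u v) (h : PrecStep G v w) : PrecStep G u w := by
  obtain ⟨a, b, hv, hs, hu⟩ := h
  exact ⟨a, b, hv, hs, he.trans hu⟩

lemma PrecStep.of_wequiv_right (h : PrecStep G u v) (he : WEquiv G v w) : PrecStep G u w := by
  obtain ⟨a, b, hv, hs, hu⟩ := h
  exact ⟨a, b, he.symm.trans hv, hs, hu⟩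

lemma PrecStep.cons (h : PrecStep G u w) (c : Letter G) : PrecStep G (c :: u) (c :: w) := by
  obtain ⟨_, _, hv, ⟨a, b, x, s, rfl, hx, rfl⟩, hu⟩ := h
  exact ⟨c :: (a ++ x ++ b), c :: (a ++ s :: b), hv.cons c,
    ⟨c :: a, b, x, s, rfl, hx, by simp⟩, hu.cons c⟩

lemma WPrec.of_wequiv_left (he : WEquiv G u v) (h : WPrec G v w) : WPrec G u w := by
  obtain ⟨b, hvb, hbw⟩ := Relation.TransGen.head'_iff.mp h
  exact Relation.TransGen.head' (hvb.of_wequiv_left he) hbw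

lemma WPrec.of_wequiv_right (h : WPrec G u v) (he : WEquiv G v w) : WPrec G u w := by
  obtain ⟨b, hub, hbv⟩ := Relation.TransGen.tail'_iff.mp h
  exact Relation.TransGen.tail' hub (hbv.of_wequiv_right he)

lemma WPreceq.trans (huv : WPreceq G u v) (hvw : WPreceq G v w) : WPreceq G u w := by
  rcases huv with huv | huv <;> rcases hvw with hvw | hvw
  · exact .inl (huv.trans hvw)
  · exact .inl (huv.of_wequiv_right hvw)
  · exact .inl (hvw.of_wequiv_left huv)
  · exact .inr (huv.trans hvw)

lemma WPreceq.cons (h : WPreceq G u w) (c : Letter G) : WPreceq G (c :: u) (c :: w) :=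
  h.imp (·.lift _ fun _ _ hs => hs.cons c) (·.cons c)

lemma IsBlock.wpreceq_append (h : IsBlock G x c) (w : Word G) : WPreceq G (x ++ w) (c :: w) := by
  rcases h with rfl | hx
  · exact .inr .refl
  · exact .inl (.single ⟨_, _, .refl, ⟨[], w, x, c, rfl, hx, rfl⟩, .refl⟩)

end Order

def Refines (G : SimpleGraph V) (u w : Word G) : Prop :=
  ∃ xs : List (Word G), List.Forall₂ (IsBlock G) xs w ∧ WEquiv G u xs.flatten

section Refines

variable {G : SimpleGraph V} {s t : Letter G} {u w w' a b : Word G}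

lemma refines_append (u v : Word G) : Refines G u (u ++ v) := by
  refine ⟨u.map ([·]) ++ v.map fun _ => [], List.rel_append ?_ ?_, ?_⟩
  · exact List.forall₂_map_left_iff.mpr (List.forall₂_same.mpr fun _ _ => .inl rfl)
  · exact List.forall₂_map_left_iff.mpr
      (List.forall₂_same.mpr fun _ _ => .inr (by simp [IsSplitting]))
  · simpa [← List.flatMap_def] using WEquiv.refl

lemma Refines.exists_blocks (h : Refines G u (a ++ s :: t :: b)) :
    ∃ xa x y xb, List.Forall₂ (IsBlock G) xa a ∧ IsBlock G x s ∧ IsBlock G y t ∧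
      List.Forall₂ (IsBlock G) xb b ∧ WEquiv G u (xa.flatten ++ x ++ y ++ xb.flatten) := by
  obtain ⟨xs, hf, he⟩ := h
  obtain ⟨x, rest, hx, hrest, hdrop⟩ :=
    List.forall₂_cons_right_iff.mp (List.forall₂_drop_append xs a _ hf)
  obtain ⟨y, xb, hy, hfb, rfl⟩ := List.forall₂_cons_right_iff.mp hrest
  refine ⟨xs.take a.length, x, y, xb, List.forall₂_take_append xs a _ hf, hx, hy, hfb, ?_⟩
  rw [← List.take_append_drop a.length xs, hdrop] at he
  simpa using he

lemma Refines.swap (h : Refines G u w) (hs : LSwapStep G w w') : Refines G u w' := by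
  obtain ⟨a, b, s, t, hst, rfl, rfl⟩ := hs
  obtain ⟨xa, x, y, xb, hfa, hx, hy, hfb, he⟩ := h.exists_blocks
  refine ⟨xa ++ y :: x :: xb, List.rel_append hfa (.cons hy (.cons hx hfb)), ?_⟩
  have hxy : WCommute G x y := fun p hp q hq =>
    (hst.mono_left (hx.subset hp)).mono_right (hy.subset hq)
  have hcomm := (wequiv_append_comm hxy).append xa.flatten xb.flatten
  simp only [List.append_assoc] at he hcomm
  simpa using he.trans hcomm

lemma Refines.absorb (hu : WIsReduced G u) (h : Refines G u w) (hs : AbsorbStep G w w') :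
    Refines G u w' := by
  obtain ⟨a, b, s, t, hst, rfl | rfl, rfl⟩ := hs
  · obtain ⟨xa, x, y, xb, hfa, hx, hy, hfb, he⟩ := h.exists_blocks
    refine ⟨xa ++ (x ++ y) :: xb, List.rel_append hfa (.cons ?_ hfb), by simpa using he⟩
    exact hx.absorb_left (hu.of_wequiv he.symm) hy hst
  · obtain ⟨xa, y, x, xb, hfa, hy, hx, hfb, he⟩ := h.exists_blocks
    refine ⟨xa ++ (y ++ x) :: xb, List.rel_append hfa (.cons ?_ hfb), by simpa using he⟩
    exact hx.absorb_right (hu.of_wequiv he.symm) hy hst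

lemma wpreceq_flatten {xs : List (Word G)} (h : List.Forall₂ (IsBlock G) xs w) :
    WPreceq G xs.flatten w := by
  induction h with
  | nil => exact .inr .refl
  | cons hx _ ih => exact (hx.wpreceq_append _).trans (ih.cons _)

lemma Refines.wpreceq (h : Refines G u w) : WPreceq G u w :=
  let ⟨_, hf, he⟩ := h
  WPreceq.trans (.inr he) (wpreceq_flatten hf)

end Refines

theorem preceq_nonsplitting_reduct_general (G : SimpleGraph V) (u v : Word G)
    (hu : WIsReduced G u) :
    ∀ r, NSRed G (u ++ v) r → WPreceq G u r := by
  rintro r ⟨hsteps, -⟩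
  refine Refines.wpreceq ?_
  induction hsteps with
  | refl => exact refines_append u v
  | tail _ hstep ih => exact hstep.elim ih.swap (ih.absorb hu)

/-- For reduced words `u` and `v`, always `u ≼ [u·v]`. -/
theorem preceq_nonsplitting_reduct (G : SimpleGraph V) (u v : Word G)
    (hu : WIsReduced G u) (hv : WIsReduced G v) :
    ∀ r, NSRed G (u ++ v) r → WPreceq G u r :=
  preceq_nonsplitting_reduct_general G u v hu
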